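/- arXiv:2112.10396 — 7 statements merged into one kernel-verified Lean document; each statement's English description precedes it below -/
import Mathlib

section
/- Let n : [0,∞) → [0,∞) be a nondecreasing function vanishing on some interval [0, t₀] with t₀ > 0, let ρ > 0 be a non-integer real number and p = ⌊ρ⌋. If n(r)/r^ρ → 0 as r → ∞, then r^{p-ρ} · ∫₀^r n(t)/t^{p+1} dt → 0 and r^{p+1-ρ} · ∫_r^∞ n(t)/t^{p+2} dt → 0 as r → ∞ (in particular, the second integral is finite for all sufficiently large r). -/
open MeasureTheory Filter Asymptotics Set Topology

/-!
Write `p = ⌊ρ⌋`; as `ρ` is not an integer, `p < ρ < p + 1`. Since `n(t) = o(t^ρ)`, the integrand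
`n(t)/t^(p+1)` is `o(t^a)` with `a = ρ - p - 1 > -1`, and `n(t)/t^(p+2)` is `o(t^a)` with
`a = ρ - p - 2 < -1`. In both regimes integration preserves the little-o: the integral over
`(0, r]` (resp. `(r, ∞)`) is `o(r^(a+1))`. For `a > -1` one splits `(0, r]` at a point `R` beyond
which the integrand is at most `ε t^a`; the part over `(0, R]` is a constant, finite because `n`
vanishes near `0`, and negligible since `r^(a+1) → ∞`.
-/

section RpowIntegrals

variable {E : Type*} [NormedAddCommGroup E] {g : ℝ → E} {a : ℝ}

theorem eventually_integrableOn_Ioi_of_isBigO_rpow {c : ℝ}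
    (hmeas : AEStronglyMeasurable g (volume.restrict (Ici c))) (ha : a < -1)
    (hg : g =O[atTop] (· ^ a)) : ∀ᶠ r in atTop, IntegrableOn g (Ioi r) := by
  have hrpow : IntegrableAtFilter (fun t : ℝ => t ^ a) atTop :=
    ⟨Ioi 1, Ioi_mem_atTop 1, integrableOn_Ioi_rpow_of_lt ha one_pos⟩
  obtain ⟨R, hR⟩ := integrableAtFilter_atTop_iff.1
    (hg.integrableAtFilter ⟨Ici c, Ici_mem_atTop c, hmeas⟩ hrpow)
  filter_upwards [eventually_ge_atTop R] with r hr
  exact hR.mono_set (Ioi_subset_Ici hr)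

variable [NormedSpace ℝ E]

theorem isLittleO_integral_Ioi_rpow (ha : a < -1) (hg : g =o[atTop] (· ^ a)) :
    (fun r => ∫ t in Ioi r, g t) =o[atTop] (· ^ (a + 1)) := by
  have ha' : 0 < -(a + 1) := by linarith
  have ha₁ : a + 1 ≠ 0 := by linarith
  refine isLittleO_iff.2 fun ε hε => ?_
  obtain ⟨R, hR⟩ := eventually_atTop.1
    ((hg.bound (mul_pos hε ha')).and (eventually_gt_atTop 0))
  filter_upwards [eventually_ge_atTop R, eventually_gt_atTop 0] with r hr hr0
  have hbound : ∀ᵐ t ∂volume.restrict (Ioi r), ‖g t‖ ≤ ε * -(a + 1) * t ^ a := by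
    refine (ae_restrict_iff' measurableSet_Ioi).2 (ae_of_all _ fun t ht => ?_)
    obtain ⟨hgt, ht0⟩ := hR t (hr.trans ht.le)
    rwa [Real.norm_of_nonneg (Real.rpow_nonneg ht0.le a)] at hgt
  calc ‖∫ t in Ioi r, g t‖
      ≤ ∫ t in Ioi r, ε * -(a + 1) * t ^ a :=
        norm_integral_le_of_norm_le ((integrableOn_Ioi_rpow_of_lt ha hr0).const_mul _) hbound
    _ = ε * ‖r ^ (a + 1)‖ := by
        rw [integral_const_mul, integral_Ioi_rpow_of_lt ha hr0,
          Real.norm_of_nonneg (Real.rpow_nonneg hr0.le _)]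
        field_simp

theorem isLittleO_integral_Ioc_rpow (c : ℝ) (ha : -1 < a)
    (hint : ∀ r, IntegrableOn g (Ioc c r)) (hg : g =o[atTop] (· ^ a)) :
    (fun r => ∫ t in Ioc c r, g t) =o[atTop] (· ^ (a + 1)) := by
  have ha' : 0 < a + 1 := by linarith
  have ha₁ : a + 1 ≠ 0 := ha'.ne'
  refine isLittleO_iff.2 fun ε hε => ?_
  obtain ⟨R, hR⟩ := eventually_atTop.1
    ((hg.bound (by positivity : 0 < ε / 2 * (a + 1))).and (eventually_gt_atTop (max c 0)))
  have hcR : c < R := (le_max_left c 0).trans_lt (hR R le_rfl).2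
  have hR0 : 0 < R := (le_max_right c 0).trans_lt (hR R le_rfl).2
  have hhead : (fun _ : ℝ => ∫ t in Ioc c R, g t) =o[atTop] (· ^ (a + 1)) :=
    isLittleO_const_left.2 (Or.inr (tendsto_norm_atTop_atTop.comp (tendsto_rpow_atTop ha')))
  filter_upwards [hhead.bound (half_pos hε), eventually_ge_atTop R] with r hhead_le hr
  have hr0 : 0 < r := hR0.trans_le hr
  have htail : ‖∫ t in Ioc R r, g t‖ ≤ ε / 2 * r ^ (a + 1) := by
    rw [← intervalIntegral.integral_of_le hr]
    calc ‖∫ t in R..r, g t‖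
        ≤ ∫ t in R..r, ε / 2 * (a + 1) * t ^ a := by
          refine intervalIntegral.norm_integral_le_of_norm_le hr (ae_of_all _ fun t ht => ?_)
            ((intervalIntegral.intervalIntegrable_rpow' ha).const_mul _)
          obtain ⟨hgt, ht0⟩ := hR t ht.1.le
          rwa [Real.norm_of_nonneg (Real.rpow_nonneg ((le_max_right c 0).trans ht0.le) a)] at hgt
      _ = ε / 2 * (r ^ (a + 1) - R ^ (a + 1)) := by
          rw [intervalIntegral.integral_const_mul, integral_rpow (Or.inl ha)]
          field_simp
      _ ≤ ε / 2 * r ^ (a + 1) := by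
          gcongr
          exact sub_le_self _ (Real.rpow_nonneg hR0.le _)
  rw [← Ioc_union_Ioc_eq_Ioc hcR.le hr, setIntegral_union (Ioc_disjoint_Ioc_of_le le_rfl)
      measurableSet_Ioc (hint R) ((hint r).mono_set (Ioc_subset_Ioc_left hcR.le)),
    Real.norm_of_nonneg (Real.rpow_nonneg hr0.le _)]
  rw [Real.norm_of_nonneg (Real.rpow_nonneg hr0.le _)] at hhead_le
  calc _ ≤ ‖∫ t in Ioc c R, g t‖ + ‖∫ t in Ioc R r, g t‖ := norm_add_le _ _
    _ ≤ ε * r ^ (a + 1) := by linarith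

end RpowIntegrals

section CountingFunction

variable {n : ℝ → ℝ}

theorem MonotoneOn.aestronglyMeasurable_div_rpow (hmono : MonotoneOn n (Ici 0)) (s : ℝ) :
    AEStronglyMeasurable (fun t => n t / t ^ s) (volume.restrict (Ici 0)) :=
  ((aemeasurable_restrict_of_monotoneOn measurableSet_Ici hmono).div
    (measurable_id.pow_const s).aemeasurable).aestronglyMeasurable

theorem MonotoneOn.integrableOn_Ioc_div_rpow (hmono : MonotoneOn n (Ici 0)) {t₀ : ℝ}
    (ht₀ : 0 < t₀) (hvanish : ∀ t ∈ Icc 0 t₀, n t = 0) {s : ℝ} (hs : 0 ≤ s) (r : ℝ) :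
    IntegrableOn (fun t => n t / t ^ s) (Ioc 0 r) := by
  have hnonneg : ∀ t, 0 ≤ t → 0 ≤ n t := fun t ht =>
    (hvanish 0 ⟨le_rfl, ht₀.le⟩).symm.le.trans (hmono self_mem_Ici ht ht)
  have hbound : ∀ t ∈ Ioc 0 r, ‖n t / t ^ s‖ ≤ n r / t₀ ^ s := by
    rintro t ⟨ht0, htr⟩
    have hr0 : 0 ≤ r := ht0.le.trans htr
    have hnr := hnonneg r hr0
    rcases le_or_gt t t₀ with htt₀ | htt₀
    · rw [hvanish t ⟨ht0.le, htt₀⟩, zero_div, norm_zero]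
      positivity
    · rw [Real.norm_of_nonneg (div_nonneg (hnonneg t ht0.le) (by positivity))]
      exact div_le_div₀ hnr (hmono ht0.le hr0 htr) (by positivity)
        (Real.rpow_le_rpow ht₀.le htt₀.le hs)
  refine Integrable.mono' (integrableOn_const measure_Ioc_lt_top.ne)
    ((hmono.aestronglyMeasurable_div_rpow s).mono_measure
      (Measure.restrict_mono (Ioc_subset_Ioi_self.trans Ioi_subset_Ici_self) le_rfl))
    ((ae_restrict_iff' measurableSet_Ioc).2 (ae_of_all _ hbound))

end CountingFunction

theorem isLittleO_div_rpow {f : ℝ → ℝ} {a : ℝ} (s : ℝ) (hf : f =o[atTop] (· ^ a)) :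
    (fun t => f t / t ^ s) =o[atTop] (· ^ (a - s)) := by
  refine (hf.mul_isBigO (isBigO_refl (fun t : ℝ => (t ^ s)⁻¹) atTop)).congr'
    (Eventually.of_forall fun t => (div_eq_mul_inv _ _).symm) ?_
  filter_upwards [eventually_gt_atTop 0] with t ht
  rw [Real.rpow_sub ht, div_eq_mul_inv]

theorem tendsto_rpow_neg_mul_of_isLittleO {F : ℝ → ℝ} {b : ℝ} (h : F =o[atTop] (· ^ b)) :
    Tendsto (fun r => r ^ (-b) * F r) atTop (𝓝 0) := by
  refine h.tendsto_div_nhds_zero.congr' ?_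
  filter_upwards [eventually_gt_atTop 0] with r hr
  rw [Real.rpow_neg hr.le, div_eq_inv_mul]

theorem stmt_3_general (n : ℝ → ℝ) (hmono : MonotoneOn n (Set.Ici 0))
    (t₀ : ℝ) (ht₀ : 0 < t₀) (hvanish : ∀ t ∈ Set.Icc 0 t₀, n t = 0)
    (ρ : ℝ) (hρ : 0 < ρ) (hnotint : ∀ m : ℤ, ρ ≠ (m : ℝ))
    (hlim : Tendsto (fun r => n r / r ^ ρ) atTop (nhds 0)) :
    (∀ᶠ r in atTop, IntegrableOn (fun t => n t / t ^ ((⌊ρ⌋₊ : ℝ) + 2)) (Set.Ioi r)) ∧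
    Tendsto (fun r => r ^ ((⌊ρ⌋₊ : ℝ) - ρ) *
        ∫ t in Set.Ioc (0:ℝ) r, n t / t ^ ((⌊ρ⌋₊ : ℝ) + 1)) atTop (nhds 0) ∧
    Tendsto (fun r => r ^ ((⌊ρ⌋₊ : ℝ) + 1 - ρ) *
        ∫ t in Set.Ioi r, n t / t ^ ((⌊ρ⌋₊ : ℝ) + 2)) atTop (nhds 0) := by
  set p : ℝ := (⌊ρ⌋₊ : ℝ)
  have hpρ : p < ρ :=
    (Nat.floor_le hρ.le).lt_of_ne fun h => hnotint ⌊ρ⌋₊ (by exact_mod_cast h.symm)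
  have hρp : ρ < p + 1 := Nat.lt_floor_add_one ρ
  have hn : n =o[atTop] (· ^ ρ) := by
    refine (isLittleO_iff_tendsto' ?_).2 hlim
    filter_upwards [eventually_gt_atTop 0] with t ht h
    exact absurd h (Real.rpow_pos_of_pos ht ρ).ne'
  refine ⟨eventually_integrableOn_Ioi_of_isBigO_rpow (hmono.aestronglyMeasurable_div_rpow _)
    (by linarith) (isLittleO_div_rpow (p + 2) hn).isBigO, ?_, ?_⟩
  · convert tendsto_rpow_neg_mul_of_isLittleO (isLittleO_integral_Ioc_rpow 0 (by linarith)
      (hmono.integrableOn_Ioc_div_rpow ht₀ hvanish (by positivity))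
      (isLittleO_div_rpow (p + 1) hn)) using 4
    ring
  · convert tendsto_rpow_neg_mul_of_isLittleO
      (isLittleO_integral_Ioi_rpow (by linarith) (isLittleO_div_rpow (p + 2) hn)) using 4
    ring

/-- If `n` is a nondecreasing nonnegative function vanishing near `0`, `ρ > 0` is
non-integer, `p = ⌊ρ⌋`, and `n(r)/r^ρ → 0`, then `r^(p-ρ) ∫₀^r n(t)/t^(p+1) dt → 0` and
`r^(p+1-ρ) ∫_r^∞ n(t)/t^(p+2) dt → 0` (the latter integral being finite for large `r`). -/
theorem stmt_3 (n : ℝ → ℝ) (hmono : MonotoneOn n (Set.Ici 0))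
    (hnonneg : ∀ t, 0 ≤ t → 0 ≤ n t)
    (t₀ : ℝ) (ht₀ : 0 < t₀) (hvanish : ∀ t ∈ Set.Icc 0 t₀, n t = 0)
    (ρ : ℝ) (hρ : 0 < ρ) (hnotint : ∀ m : ℤ, ρ ≠ (m : ℝ))
    (hlim : Tendsto (fun r => n r / r ^ ρ) atTop (nhds 0)) :
    (∀ᶠ r in atTop, IntegrableOn (fun t => n t / t ^ ((⌊ρ⌋₊ : ℝ) + 2)) (Set.Ioi r)) ∧
    Tendsto (fun r => r ^ ((⌊ρ⌋₊ : ℝ) - ρ) *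
        ∫ t in Set.Ioc (0:ℝ) r, n t / t ^ ((⌊ρ⌋₊ : ℝ) + 1)) atTop (nhds 0) ∧
    Tendsto (fun r => r ^ ((⌊ρ⌋₊ : ℝ) + 1 - ρ) *
        ∫ t in Set.Ioi r, n t / t ^ ((⌊ρ⌋₊ : ℝ) + 2)) atTop (nhds 0) :=
  stmt_3_general n hmono t₀ ht₀ hvanish ρ hρ hnotint hlim
end

section
/- Let n : [0,∞) → [0,∞) be a nondecreasing function vanishing on some interval [0, t₀] with t₀ > 0, let ρ₁ > 0 be a non-integer real number, p = ⌊ρ₁⌋, and define β(r) = r^{p-ρ₁} ( ∫₀^r n(t)/t^{p+1} dt + r·∫_r^∞ n(t)/t^{p+2} dt ). If (ln r)·n(r)/r^{ρ₁} → 0 as r → ∞, then β(r)·ln r → 0 as r → ∞. -/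
/-!
Put `a = ρ₁ - p`; non-integrality of `ρ₁` gives `0 < a < 1`. The hypothesis says
`n t = o(t ^ ρ₁ / log t)`, so the two integrands are `o(t ^ (a - 1) / log t)` and
`o(t ^ (a - 2) / log t)`. Since `a - 1 > -1`, integrating over `(0, r]` gives `o(r ^ a / log r)`:
splitting at `√r`, where `log t ≥ log r / 2` to the right, shows
`∫_R^r t ^ (a - 1) / log t = O(r ^ a / log r)`. Since `a - 2 < -1` and `log t ≥ log r` for
`t > r`, integrating over `(r, ∞)` gives `o(r ^ (a - 1) / log r)`. Hence the bracket in `β(r)`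
is `o(r ^ a / log r)`.
-/

open MeasureTheory Filter Asymptotics Real Set

theorem setIntegral_Ioc_le_mul_rpow {f : ℝ → ℝ} {u v M c : ℝ} (hu : 0 ≤ u) (huv : u ≤ v)
    (hc : -1 < c) (hM : 0 ≤ M) (hf : IntegrableOn f (Ioc u v))
    (hle : ∀ t ∈ Ioc u v, f t ≤ M * t ^ c) :
    ∫ t in Ioc u v, f t ≤ M * (v ^ (c + 1) / (c + 1)) := by
  have hpow : IntegrableOn (fun t => t ^ c) (Ioc u v) :=
    (intervalIntegrable_iff_integrableOn_Ioc_of_le huv).1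
      (intervalIntegral.intervalIntegrable_rpow' hc)
  calc ∫ t in Ioc u v, f t ≤ ∫ t in Ioc u v, M * t ^ c :=
        setIntegral_mono_on hf (hpow.const_mul M) measurableSet_Ioc hle
    _ = M * ((v ^ (c + 1) - u ^ (c + 1)) / (c + 1)) := by
        rw [integral_const_mul, ← intervalIntegral.integral_of_le huv, integral_rpow (Or.inl hc)]
    _ ≤ M * (v ^ (c + 1) / (c + 1)) := by
        have : 0 ≤ u ^ (c + 1) := rpow_nonneg hu _
        gcongr <;> linarith

theorem integrableOn_rpow_div_log {c u v : ℝ} (hu : 1 < u) :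
    IntegrableOn (fun t => t ^ c / log t) (Ioc u v) := by
  refine (ContinuousOn.integrableOn_Icc fun t ht => ?_).mono_set Ioc_subset_Icc_self
  have ht1 : 1 < t := hu.trans_le ht.1
  exact ((continuousAt_rpow_const t c (Or.inl (by linarith))).div
    (continuousAt_log (by linarith)) (log_pos ht1).ne').continuousWithinAt

theorem integral_Ioc_rpow_div_log_le {c R r : ℝ} (hc : -1 < c) (hR : 1 < R) (hr : R ^ 2 ≤ r) :
    ∫ t in Ioc R r, t ^ c / log t ≤
      (log R)⁻¹ / (c + 1) * r ^ ((c + 1) / 2) + 2 / (c + 1) * (r ^ (c + 1) / log r) := by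
  have hr1 : 1 < r := by nlinarith
  have hRs : R ≤ √r := le_sqrt_of_sq_le hr
  have hsr : √r ≤ r := sqrt_le_self_iff.2 (Or.inr hr1.le)
  have hs1 : 1 < √r := hR.trans_le hRs
  have hlog_sqrt : log √r = log r / 2 := log_sqrt (by linarith)
  have hsqrt : √r ^ (c + 1) = r ^ ((c + 1) / 2) := by
    rw [sqrt_eq_rpow, ← rpow_mul (by linarith)]
    ring_nf
  have hlow : ∫ t in Ioc R √r, t ^ c / log t ≤ (log R)⁻¹ * (√r ^ (c + 1) / (c + 1)) :=
    setIntegral_Ioc_le_mul_rpow (by linarith) hRs hc (inv_nonneg.2 (log_pos hR).le)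
      (integrableOn_rpow_div_log hR) fun t ht => by
        rw [← div_eq_inv_mul]
        exact div_le_div_of_nonneg_left (rpow_nonneg (by linarith [ht.1]) _) (log_pos hR)
          (log_le_log (by linarith) ht.1.le)
  have hhigh : ∫ t in Ioc √r r, t ^ c / log t ≤ (log √r)⁻¹ * (r ^ (c + 1) / (c + 1)) :=
    setIntegral_Ioc_le_mul_rpow (by linarith) hsr hc (inv_nonneg.2 (log_pos hs1).le)
      (integrableOn_rpow_div_log hs1) fun t ht => by
        rw [← div_eq_inv_mul]
        exact div_le_div_of_nonneg_left (rpow_nonneg (by linarith [ht.1]) _) (log_pos hs1)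
          (log_le_log (by linarith) ht.1.le)
  rw [← Ioc_union_Ioc_eq_Ioc hRs hsr, setIntegral_union (Ioc_disjoint_Ioc_of_le le_rfl)
    measurableSet_Ioc (integrableOn_rpow_div_log hR) (integrableOn_rpow_div_log hs1)]
  calc _ ≤ (log R)⁻¹ * (√r ^ (c + 1) / (c + 1)) + (log √r)⁻¹ * (r ^ (c + 1) / (c + 1)) :=
          add_le_add hlow hhigh
    _ = _ := by rw [hsqrt, hlog_sqrt]; ring

theorem isLittleO_rpow_rpow_div_log {a b : ℝ} (hba : b < a) :
    (fun r : ℝ => r ^ b) =o[atTop] fun r => r ^ a / log r := by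
  refine ((isLittleO_log_rpow_atTop (sub_pos.2 hba)).mul_isBigO
    (isBigO_refl (fun r => r ^ b / log r) atTop)).congr' ?_ ?_
  all_goals filter_upwards [eventually_gt_atTop 1] with r hr
  · field_simp [(log_pos hr).ne']
  · rw [← mul_div_assoc, ← rpow_add (by linarith), sub_add_cancel]

theorem isBigO_integral_Ioc_rpow_div_log {c R : ℝ} (hc : -1 < c) (hR : 1 < R) :
    (fun r => ∫ t in Ioc R r, t ^ c / log t) =O[atTop] fun r => r ^ (c + 1) / log r := by
  have hmajor : (fun r => (log R)⁻¹ / (c + 1) * r ^ ((c + 1) / 2) +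
      2 / (c + 1) * (r ^ (c + 1) / log r)) =O[atTop] fun r => r ^ (c + 1) / log r :=
    ((isLittleO_rpow_rpow_div_log (half_lt_self (by linarith))).isBigO.const_mul_left _).add
      ((isBigO_refl _ _).const_mul_left _)
  refine IsBigO.trans (IsBigO.of_bound 1 ?_) hmajor
  filter_upwards [eventually_ge_atTop (R ^ 2)] with r hr
  have hnonneg : 0 ≤ ∫ t in Ioc R r, t ^ c / log t :=
    setIntegral_nonneg measurableSet_Ioc fun t ht =>
      div_nonneg (rpow_nonneg (by linarith [ht.1]) _) (log_nonneg (by linarith [ht.1]))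
  rw [one_mul, norm_of_nonneg hnonneg]
  exact (integral_Ioc_rpow_div_log_le hc hR hr).trans (le_norm_self _)

section

variable {E : Type*} [NormedAddCommGroup E] [NormedSpace ℝ E]

theorem isLittleO_integral_Ioc_of_isLittleO {g : ℝ → E} {c : ℝ} (hc : -1 < c)
    (hint : ∀ r, IntegrableOn g (Ioc 0 r)) (hg : g =o[atTop] fun t => t ^ c / log t) :
    (fun r => ∫ t in Ioc 0 r, g t) =o[atTop] fun r => r ^ (c + 1) / log r := by
  obtain ⟨K, hK, hKbound⟩ := (isBigO_integral_Ioc_rpow_div_log hc one_lt_two).exists_pos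
  refine isLittleO_iff.2 fun ε hε => ?_
  set δ := ε / (1 + K)
  have hδ : 0 < δ := by positivity
  obtain ⟨R, hR⟩ := eventually_atTop.1 ((hg.def hδ).and (eventually_ge_atTop 2))
  have hR2 : 2 ≤ R := (hR R le_rfl).2
  have hhalf : 0 < (c + 1) / 2 := by linarith
  have hconst : (fun _ => ∫ t in Ioc 0 R, g t) =o[atTop] fun r => r ^ (c + 1) / log r :=
    (isBigO_const_one ℝ _ atTop).trans_isLittleO <|
      ((isLittleO_one_left_iff ℝ).2
        (tendsto_norm_atTop_atTop.comp (tendsto_rpow_atTop hhalf))).trans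
          (isLittleO_rpow_rpow_div_log (half_lt_self (by linarith)))
  filter_upwards [hKbound.bound, hconst.def hδ, eventually_ge_atTop R] with r hKr hCr hRr
  have hsplit : ∫ t in Ioc 0 r, g t = (∫ t in Ioc 0 R, g t) + ∫ t in Ioc R r, g t := by
    rw [← Ioc_union_Ioc_eq_Ioc (by linarith) hRr]
    exact setIntegral_union (Ioc_disjoint_Ioc_of_le le_rfl) measurableSet_Ioc (hint R)
      ((hint r).mono_set (Ioc_subset_Ioc_left (by linarith)))
  have hfar : ‖∫ t in Ioc R r, g t‖ ≤ δ * ∫ t in Ioc 2 r, t ^ c / log t := by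
    have hpos : ∀ t ∈ Ioc (2 : ℝ) r, 0 ≤ t ^ c / log t := fun t ht =>
      div_nonneg (rpow_nonneg (by linarith [ht.1]) c) (log_nonneg (by linarith [ht.1]))
    rw [← integral_const_mul]
    calc ‖∫ t in Ioc R r, g t‖ ≤ ∫ t in Ioc R r, δ * (t ^ c / log t) :=
          norm_integral_le_of_norm_le ((integrableOn_rpow_div_log (by linarith)).const_mul δ)
            ((ae_restrict_iff' measurableSet_Ioc).2 (Eventually.of_forall fun t ht => by
              rw [← norm_of_nonneg (hpos t (Ioc_subset_Ioc_left hR2 ht))]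
              exact (hR t ht.1.le).1))
      _ ≤ ∫ t in Ioc 2 r, δ * (t ^ c / log t) :=
          setIntegral_mono_set ((integrableOn_rpow_div_log one_lt_two).const_mul δ)
            ((ae_restrict_iff' measurableSet_Ioc).2 (Eventually.of_forall fun t ht =>
              mul_nonneg hδ.le (hpos t ht)))
            (Ioc_subset_Ioc_left hR2).eventuallyLE
  calc ‖∫ t in Ioc 0 r, g t‖ ≤ ‖∫ t in Ioc 0 R, g t‖ + ‖∫ t in Ioc R r, g t‖ :=
        hsplit ▸ norm_add_le _ _
    _ ≤ δ * ‖r ^ (c + 1) / log r‖ + δ * (K * ‖r ^ (c + 1) / log r‖) :=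
        add_le_add hCr (hfar.trans (mul_le_mul_of_nonneg_left ((le_norm_self _).trans hKr) hδ.le))
    _ = ε * ‖r ^ (c + 1) / log r‖ := by
        simp only [δ]
        field_simp

theorem isLittleO_integral_Ioi_of_isLittleO {g : ℝ → E} {c : ℝ} (hc : c < -1)
    (hg : g =o[atTop] fun t => t ^ c / log t) :
    (fun r => ∫ t in Ioi r, g t) =o[atTop] fun r => r ^ (c + 1) / log r := by
  refine isLittleO_iff.2 fun ε hε => ?_
  have hδ : 0 < ε * -(c + 1) := mul_pos hε (by linarith)
  obtain ⟨R, hR⟩ := eventually_atTop.1 ((hg.def hδ).and (eventually_gt_atTop 1))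
  filter_upwards [eventually_ge_atTop R, eventually_gt_atTop 1] with r hRr hr1
  have hr0 : 0 < r := by linarith
  have hlog : 0 < log r := log_pos hr1
  have hbound : ∀ t ∈ Ioi r, ‖g t‖ ≤ ε * -(c + 1) / log r * t ^ c := by
    intro t ht
    obtain ⟨hgt, ht1⟩ := hR t (hRr.trans ht.le)
    rw [norm_of_nonneg (div_nonneg (rpow_nonneg (by linarith) c) (log_nonneg ht1.le))] at hgt
    calc ‖g t‖ ≤ ε * -(c + 1) * (t ^ c / log t) := hgt
      _ ≤ ε * -(c + 1) * (t ^ c / log r) := by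
        gcongr
        exact ht.le
      _ = ε * -(c + 1) / log r * t ^ c := by ring
  calc ‖∫ t in Ioi r, g t‖ ≤ ∫ t in Ioi r, ε * -(c + 1) / log r * t ^ c :=
        norm_integral_le_of_norm_le ((integrableOn_Ioi_rpow_of_lt hc hr0).const_mul _)
          ((ae_restrict_iff' measurableSet_Ioi).2 (Eventually.of_forall hbound))
    _ = ε * ‖r ^ (c + 1) / log r‖ := by
        have hc1 : c + 1 ≠ 0 := by linarith
        rw [integral_const_mul, integral_Ioi_rpow_of_lt hc hr0, norm_of_nonneg (by positivity)]
        field_simp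

end

theorem isLittleO_div_rpow_of_tendsto {n : ℝ → ℝ} {ρ : ℝ}
    (h : Tendsto (fun r => log r * n r / r ^ ρ) atTop (nhds 0)) (q : ℝ) :
    (fun t => n t / t ^ q) =o[atTop] fun t => t ^ (ρ - q) / log t := by
  have hn : n =o[atTop] fun t => t ^ ρ / log t := by
    refine (isLittleO_iff_tendsto' ?_).2 (h.congr fun r => by rw [div_div_eq_mul_div, mul_comm])
    filter_upwards [eventually_gt_atTop 1] with t ht hzero
    exact absurd hzero (div_ne_zero (rpow_pos_of_pos (by linarith) _).ne' (log_pos ht).ne')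
  refine (hn.mul_isBigO (isBigO_refl (fun t => (t ^ q)⁻¹) atTop)).congr'
    (Eventually.of_forall fun t => (div_eq_mul_inv _ _).symm) ?_
  filter_upwards [eventually_gt_atTop 0] with t ht
  rw [rpow_sub ht]
  ring

theorem integrableOn_Ioc_div_rpow_of_monotoneOn {n : ℝ → ℝ} {t₀ : ℝ} (ht₀ : 0 < t₀)
    (hmono : MonotoneOn n (Ici t₀)) (hvanish : ∀ t ∈ Ioc 0 t₀, n t = 0) (q r : ℝ) :
    IntegrableOn (fun t => n t / t ^ q) (Ioc 0 r) := by
  have hnear : IntegrableOn (fun t => n t / t ^ q) (Ioc 0 t₀) :=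
    integrableOn_zero.congr_fun (fun t ht => by simp [hvanish t ht]) measurableSet_Ioc
  have hfar : IntegrableOn (fun t => n t / t ^ q) (Icc t₀ r) := by
    simp only [div_eq_mul_inv]
    refine ((hmono.mono Icc_subset_Ici_self).integrableOn_isCompact
      isCompact_Icc).mul_continuousOn (fun t ht => ?_) isCompact_Icc
    have ht0 : 0 < t := ht₀.trans_le ht.1
    exact ((continuousAt_rpow_const t q (Or.inl ht0.ne')).inv₀
      (rpow_pos_of_pos ht0 q).ne').continuousWithinAt
  exact (hnear.union hfar).mono_set fun t ht =>
    (le_or_gt t t₀).imp (fun h => ⟨ht.1, h⟩) (fun h => ⟨h.le, ht.2⟩)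

theorem stmt_5_general (n : ℝ → ℝ) (hmono : MonotoneOn n (Set.Ici 0))
    (t₀ : ℝ) (ht₀ : 0 < t₀) (hvanish : ∀ t ∈ Set.Icc 0 t₀, n t = 0)
    (ρ₁ : ℝ) (hρ₁ : 0 < ρ₁) (hnotint : ∀ m : ℤ, ρ₁ ≠ (m : ℝ))
    (hlim : Tendsto (fun r => Real.log r * n r / r ^ ρ₁) atTop (nhds 0)) :
    Tendsto (fun r =>
        (r ^ ((⌊ρ₁⌋₊ : ℝ) - ρ₁) *
          ((∫ t in Set.Ioc (0:ℝ) r, n t / t ^ ((⌊ρ₁⌋₊ : ℝ) + 1)) +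
            r * ∫ t in Set.Ioi r, n t / t ^ ((⌊ρ₁⌋₊ : ℝ) + 2))) * Real.log r)
      atTop (nhds 0) := by
  set p : ℝ := (⌊ρ₁⌋₊ : ℝ)
  have hp : p < ρ₁ :=
    (Nat.floor_le hρ₁.le).lt_of_ne (by exact_mod_cast (hnotint ⌊ρ₁⌋₊).symm)
  have hp1 : ρ₁ < p + 1 := Nat.lt_floor_add_one ρ₁
  have hhead := isLittleO_integral_Ioc_of_isLittleO (c := ρ₁ - (p + 1)) (by linarith)
    (integrableOn_Ioc_div_rpow_of_monotoneOn ht₀ (hmono.mono (Ici_subset_Ici.2 ht₀.le))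
      (fun t ht => hvanish t (Ioc_subset_Icc_self ht)) (p + 1))
    (isLittleO_div_rpow_of_tendsto hlim (p + 1))
  have htail := isLittleO_integral_Ioi_of_isLittleO (c := ρ₁ - (p + 2)) (by linarith)
    (isLittleO_div_rpow_of_tendsto hlim (p + 2))
  rw [show ρ₁ - (p + 1) + 1 = ρ₁ - p by ring] at hhead
  rw [show ρ₁ - (p + 2) + 1 = ρ₁ - p - 1 by ring] at htail
  have hsum := hhead.add (((isBigO_refl (fun r : ℝ => r) atTop).mul_isLittleO htail).congr'
    EventuallyEq.rfl <| by
      filter_upwards [eventually_gt_atTop 0] with r hr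
      rw [← mul_div_assoc, ← rpow_one_add' hr.le (by linarith)]
      ring_nf)
  refine hsum.tendsto_div_nhds_zero.congr' ?_
  filter_upwards [eventually_gt_atTop 0] with r hr
  rw [show p - ρ₁ = -(ρ₁ - p) by ring, rpow_neg hr.le]
  field_simp

/-- Lemma 3 of the paper: if `n` is a nondecreasing nonnegative function vanishing near `0`,
`ρ₁ > 0` is non-integer, `p = ⌊ρ₁⌋`,
`β(r) = r^(p-ρ₁)(∫₀^r n(t)/t^(p+1) dt + r·∫_r^∞ n(t)/t^(p+2) dt)`, and
`(ln r)·n(r)/r^ρ₁ → 0`, then `β(r)·ln r → 0` as `r → ∞`. -/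
theorem stmt_5 (n : ℝ → ℝ) (hmono : MonotoneOn n (Set.Ici 0))
    (hnonneg : ∀ t, 0 ≤ t → 0 ≤ n t)
    (t₀ : ℝ) (ht₀ : 0 < t₀) (hvanish : ∀ t ∈ Set.Icc 0 t₀, n t = 0)
    (ρ₁ : ℝ) (hρ₁ : 0 < ρ₁) (hnotint : ∀ m : ℤ, ρ₁ ≠ (m : ℝ))
    (hlim : Tendsto (fun r => Real.log r * n r / r ^ ρ₁) atTop (nhds 0)) :
    Tendsto (fun r =>
        (r ^ ((⌊ρ₁⌋₊ : ℝ) - ρ₁) *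
          ((∫ t in Set.Ioc (0:ℝ) r, n t / t ^ ((⌊ρ₁⌋₊ : ℝ) + 1)) +
            r * ∫ t in Set.Ioi r, n t / t ^ ((⌊ρ₁⌋₊ : ℝ) + 2))) * Real.log r)
      atTop (nhds 0) :=
  stmt_5_general n hmono t₀ ht₀ hvanish ρ₁ hρ₁ hnotint hlim
end

section
/- For every ρ > 0 there exists a nondecreasing sequence (a_k)_{k≥1} of positive real numbers tending to infinity, with counting function n(r) = #{k : a_k < r}, such that: (i) ∑_{k=1}^∞ 1/a_k^ρ = ∞; (ii) ∑_{k=1}^∞ 1/a_k^{ρ+ε} < ∞ for every ε > 0; (iii) n(r)/r^ρ → 0 as r → ∞ (the density is zero); and (iv) (ln r)·n(r)/r^ρ → 0 as r → ∞. -/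
/-!
Take `a_k = b_k ^ (1/ρ)` with `b_k = x log x log log x` at `x = k + 3`; since
`n_a(r) = n_b(r^ρ)`, everything reduces to `ρ = 1`. The increments of `log log log x` are
at most `1 / (x log x log log x)`, so `∑ 1/b_k` diverges, while `b_k ≥ k` eventually gives
`∑ b_k^(-1-δ) < ∞`. For the counting function, `b_{n-1} < r` with `n = n_b(r)`, and
`log x / x` decreases, so
`log r · n(r) / r ≤ n · log b_{n-1} / b_{n-1} ≤ 3 / log log (n + 2) → 0`.
Dividing by `log r` gives density zero.
-/

open Filter Real Topology

lemma log_sub_log_le {u v : ℝ} (hu : 0 < u) (hv : 0 < v) : log v - log u ≤ (v - u) / u := by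
  rw [← log_div hv.ne' hu.ne', sub_div, div_self hu.ne']
  exact log_le_sub_one_of_pos (div_pos hv hu)

noncomputable def xLogLog (x : ℝ) : ℝ := x * log x * log (log x)

section xLogLog

variable {x : ℝ}

lemma one_lt_log_of_exp_one_lt (hx : exp 1 < x) : 1 < log x :=
  (lt_log_iff_exp_lt (lt_trans (exp_pos 1) hx)).2 hx

lemma xLogLog_pos (hx : exp 1 < x) : 0 < xLogLog x := by
  have h1 := one_lt_log_of_exp_one_lt hx
  have h2 : 0 < log (log x) := log_pos h1
  have h0 : 0 < x := lt_trans (exp_pos 1) hx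
  unfold xLogLog
  positivity

lemma xLogLog_monotoneOn : MonotoneOn xLogLog (Set.Ioi (exp 1)) := by
  intro x hx y hy hxy
  have hlx := one_lt_log_of_exp_one_lt hx
  have hly := one_lt_log_of_exp_one_lt hy
  have hlxy : log x ≤ log y := log_le_log (lt_trans (exp_pos 1) hx) hxy
  have : 0 < log (log x) := log_pos hlx
  have : 0 < y := lt_trans (exp_pos 1) hy
  unfold xLogLog
  gcongr

lemma tendsto_xLogLog_atTop : Tendsto xLogLog atTop atTop :=
  (tendsto_id.atTop_mul_atTop₀ tendsto_log_atTop).atTop_mul_atTop₀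
    (tendsto_log_atTop.comp tendsto_log_atTop)

lemma eventually_le_xLogLog : ∀ᶠ x in atTop, x ≤ xLogLog x := by
  have h := (tendsto_log_atTop.atTop_mul_atTop₀
    (tendsto_log_atTop.comp tendsto_log_atTop)).eventually_ge_atTop 1
  filter_upwards [h, eventually_ge_atTop 0] with x hx hx0
  simpa [xLogLog, mul_assoc] using mul_le_mul_of_nonneg_left hx hx0

/-- Telescoping this makes `∑ 1 / xLogLog (k + c)` diverge like `log log log n`. -/
lemma log_log_log_add_one_sub_le (hx : exp 1 < x) :
    log (log (log (x + 1))) - log (log (log x)) ≤ 1 / xLogLog x := by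
  have hx0 : 0 < x := lt_trans (exp_pos 1) hx
  have hx1 : exp 1 < x + 1 := by linarith
  have hl := one_lt_log_of_exp_one_lt hx
  have hl1 := one_lt_log_of_exp_one_lt hx1
  have hll := log_pos hl
  have hll1 := log_pos hl1
  have step1 : log (x + 1) - log x ≤ 1 / x := by
    simpa using log_sub_log_le hx0 (by linarith : 0 < x + 1)
  have step2 : log (log (x + 1)) - log (log x) ≤ 1 / (x * log x) := by
    calc _ ≤ (log (x + 1) - log x) / log x := log_sub_log_le (by linarith) (by linarith)
      _ ≤ 1 / x / log x := by gcongr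
      _ = 1 / (x * log x) := by rw [div_div]
  calc _ ≤ (log (log (x + 1)) - log (log x)) / log (log x) := log_sub_log_le hll hll1
    _ ≤ 1 / (x * log x) / log (log x) := by gcongr
    _ = 1 / xLogLog x := by rw [div_div, xLogLog]

/-- Each of the three summands of `log (xLogLog x)` is at most `log x`. -/
lemma log_xLogLog_le (hx : exp 1 < x) : log (xLogLog x) ≤ 3 * log x := by
  have hx0 : 0 < x := lt_trans (exp_pos 1) hx
  have hl := one_lt_log_of_exp_one_lt hx
  have hll := log_pos hl
  have h1 : log (log x) ≤ log x := log_le_self (by linarith)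
  have h2 : log (log (log x)) ≤ log (log x) := log_le_self hll.le
  rw [xLogLog, log_mul (by positivity) hll.ne', log_mul hx0.ne' (by positivity)]
  linarith

end xLogLog

section shifted

variable {c : ℝ}

lemma not_summable_one_div_xLogLog_nat_add (hc : exp 1 < c) :
    ¬ Summable fun k : ℕ => 1 / xLogLog (k + c) := by
  have hk (k : ℕ) : exp 1 < k + c := by linarith [k.cast_nonneg (α := ℝ)]
  rw [not_summable_iff_tendsto_nat_atTop_of_nonneg
    fun k => (one_div_pos.2 (xLogLog_pos (hk k))).le]
  have hL3 : Tendsto (fun n : ℕ => log (log (log (n + c))) - log (log (log c))) atTop atTop :=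
    tendsto_atTop_add_const_right _ _ <| (tendsto_log_atTop.comp <| tendsto_log_atTop.comp <|
      tendsto_log_atTop.comp <| tendsto_atTop_add_const_right _ c tendsto_natCast_atTop_atTop)
  refine tendsto_atTop_mono (fun n => ?_) hL3
  have htele := Finset.sum_range_sub (fun k : ℕ => log (log (log (k + c)))) n
  simp only [Nat.cast_zero, zero_add, Nat.cast_add_one] at htele
  rw [← htele]
  refine Finset.sum_le_sum fun k _ => ?_
  simpa [add_right_comm] using log_log_log_add_one_sub_le (hk k)

lemma summable_one_div_xLogLog_nat_add_rpow (hc : 0 ≤ c) {δ : ℝ} (hδ : 0 < δ) :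
    Summable fun k : ℕ => 1 / xLogLog (k + c) ^ (1 + δ) := by
  refine (summable_one_div_nat_rpow.2 (by linarith : 1 < 1 + δ)).of_norm_bounded_eventually_nat ?_
  have hle := (tendsto_atTop_add_const_right _ c tendsto_natCast_atTop_atTop).eventually
    eventually_le_xLogLog
  filter_upwards [hle, eventually_ge_atTop 1] with k hk hk1
  have hk0 : (0 : ℝ) < k := by exact_mod_cast hk1
  have hkF : (k : ℝ) ≤ xLogLog (k + c) := by linarith
  have hF0 : 0 ≤ xLogLog (k + c) := by linarith
  rw [norm_of_nonneg (by positivity)]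
  gcongr

lemma tendsto_nat_add_one_mul_log_xLogLog_div (hc : exp 1 < c) :
    Tendsto (fun k : ℕ => (k + 1) * log (xLogLog (k + c)) / xLogLog (k + c)) atTop (𝓝 0) := by
  have hk (k : ℕ) : exp 1 < k + c := by linarith [k.cast_nonneg (α := ℝ)]
  have hc1 : 1 ≤ c := by linarith [add_one_le_exp (1 : ℝ)]
  have hLL : Tendsto (fun k : ℕ => 3 / log (log (k + c))) atTop (𝓝 0) :=
    tendsto_const_nhds.div_atTop <| tendsto_log_atTop.comp <| tendsto_log_atTop.comp <|
      tendsto_atTop_add_const_right _ c tendsto_natCast_atTop_atTop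
  have hF1 := (tendsto_xLogLog_atTop.comp <| tendsto_atTop_add_const_right _ c
    tendsto_natCast_atTop_atTop).eventually_ge_atTop 1
  refine squeeze_zero' (hF1.mono fun k hk1 => by have := log_nonneg hk1; positivity)
    (Eventually.of_forall fun k => ?_) hLL
  have hx := hk k
  have hl := one_lt_log_of_exp_one_lt hx
  have hll := log_pos hl
  have hnum : (k + 1) * log (xLogLog (k + c)) ≤ (k + c) * (3 * log (k + c)) :=
    calc (k + 1) * log (xLogLog (k + c)) ≤ (k + 1) * (3 * log (k + c)) := by
          gcongr; exact log_xLogLog_le hx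
      _ ≤ (k + c) * (3 * log (k + c)) := by gcongr
  calc (k + 1) * log (xLogLog (k + c)) / xLogLog (k + c)
      ≤ (k + c) * (3 * log (k + c)) / xLogLog (k + c) := by
        gcongr; exact (xLogLog_pos hx).le
    _ = 3 / log (log (k + c)) := by
        have : (0 : ℝ) < k + c := lt_trans (exp_pos 1) hx
        unfold xLogLog; field_simp

end shifted

section counting

variable {a : ℕ → ℝ}

lemma finite_setOf_lt (ha : Tendsto a atTop atTop) (r : ℝ) : {k | a k < r}.Finite := by
  refine (eventually_cofinite.1 ?_).subset fun k (hk : a k < r) => hk.not_ge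
  rw [Nat.cofinite_eq_atTop]
  exact ha.eventually_ge_atTop r

lemma card_setOf_lt_le (ha : Monotone a) {r : ℝ} {N : ℕ} (h : r ≤ a N) :
    Nat.card {k | a k < r} ≤ N := by
  have hsub : {k | a k < r} ⊆ Set.Iio N := fun k hk => by
    by_contra hkN
    exact (h.trans (ha (not_lt.1 hkN))).not_gt hk
  simpa using Nat.card_mono (Set.finite_Iio N) hsub

lemma lt_card_setOf_lt (ha : Monotone a) {r : ℝ} (hfin : {k | a k < r}.Finite) {K : ℕ}
    (h : a K < r) : K < Nat.card {k | a k < r} := by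
  have hsub : Set.Iic K ⊆ {k | a k < r} := fun k hk => (ha hk).trans_lt h
  simpa using Nat.card_mono hfin hsub

lemma apply_card_setOf_lt_sub_one_lt (ha : Monotone a) {r : ℝ}
    (h : 0 < Nat.card {k | a k < r}) : a (Nat.card {k | a k < r} - 1) < r := by
  by_contra! hle
  have := card_setOf_lt_le ha hle
  omega

lemma tendsto_card_setOf_lt_atTop (ha : Monotone a) (ha' : Tendsto a atTop atTop) :
    Tendsto (fun r : ℝ => Nat.card {k | a k < r}) atTop atTop := by
  refine tendsto_atTop.2 fun K => ?_
  filter_upwards [eventually_gt_atTop (a K)] with r hr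
  exact (lt_card_setOf_lt ha (finite_setOf_lt ha' r) hr).le

/-- With `n = n(r)` we have `a (n - 1) < r`, so `log r / r ≤ log a (n - 1) / a (n - 1)` once
`a (n - 1) ≥ e`, where `log x / x` decreases. -/
lemma tendsto_log_mul_card_setOf_lt_div (ha : Monotone a) (ha' : Tendsto a atTop atTop)
    (h : Tendsto (fun k : ℕ => (k + 1) * log (a k) / a k) atTop (𝓝 0)) :
    Tendsto (fun r => log r * Nat.card {k | a k < r} / r) atTop (𝓝 0) := by
  have hn := tendsto_card_setOf_lt_atTop ha ha'
  have hn1 := (tendsto_sub_atTop_nat 1).comp hn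
  refine squeeze_zero' ?_ ?_ (h.comp hn1)
  · filter_upwards [eventually_ge_atTop 1] with r hr
    have := log_nonneg hr
    positivity
  · filter_upwards [hn.eventually_ge_atTop 1, hn1.eventually (ha'.eventually_ge_atTop (exp 1))]
      with r hr he
    set n := Nat.card {k | a k < r}
    have hlt : a (n - 1) < r := apply_card_setOf_lt_sub_one_lt ha hr
    have hcast : ((n - 1 : ℕ) : ℝ) + 1 = n := by norm_cast; omega
    have hanti : log r / r ≤ log (a (n - 1)) / a (n - 1) :=
      log_div_self_antitoneOn he (le_trans he hlt.le) hlt.le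
    calc log r * n / r = n * (log r / r) := by ring
      _ ≤ n * (log (a (n - 1)) / a (n - 1)) := by gcongr
      _ = (((n - 1 : ℕ) : ℝ) + 1) * log (a (n - 1)) / a (n - 1) := by rw [hcast]; ring

end counting

lemma tendsto_div_of_tendsto_log_mul_div {f g : ℝ → ℝ}
    (h : Tendsto (fun r => log r * f r / g r) atTop (𝓝 0)) :
    Tendsto (fun r => f r / g r) atTop (𝓝 0) := by
  have := tendsto_log_atTop.inv_tendsto_atTop.mul h
  rw [zero_mul] at this
  refine this.congr' ?_
  filter_upwards [eventually_gt_atTop 1] with r hr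
  rw [Pi.inv_apply, ← mul_div_assoc, inv_mul_cancel_left₀ (log_pos hr).ne']

lemma tendsto_log_mul_card_setOf_rpow_inv_lt_div {b : ℕ → ℝ} (hb : ∀ k, 0 ≤ b k)
    {ρ : ℝ} (hρ : 0 < ρ)
    (h : Tendsto (fun s => log s * Nat.card {k | b k < s} / s) atTop (𝓝 0)) :
    Tendsto (fun r => log r * Nat.card {k | b k ^ ρ⁻¹ < r} / r ^ ρ) atTop (𝓝 0) := by
  have := (h.comp (tendsto_rpow_atTop hρ)).const_mul ρ⁻¹
  rw [mul_zero] at this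
  refine this.congr' ?_
  filter_upwards [eventually_gt_atTop 0] with r hr
  have hset : {k | b k ^ ρ⁻¹ < r} = {k | b k < r ^ ρ} :=
    Set.ext fun k => rpow_inv_lt_iff_of_pos (hb k) hr.le hρ
  simp only [Function.comp_apply, hset, log_rpow hr]
  field_simp

/-- Example 1 of the paper: for every `ρ > 0` there is a nondecreasing sequence `(a_k)` of
positive reals tending to infinity whose counting function `n(r) = #{k : a_k < r}` satisfies:
`∑ 1/a_k^ρ = ∞`, `∑ 1/a_k^(ρ+ε) < ∞` for every `ε > 0`, `n(r)/r^ρ → 0`, and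
`(ln r)·n(r)/r^ρ → 0`. -/
theorem stmt_6 (ρ : ℝ) (hρ : 0 < ρ) :
    ∃ a : ℕ → ℝ, (∀ k, 0 < a k) ∧ Monotone a ∧ Tendsto a atTop atTop ∧
      (¬ Summable fun k => 1 / a k ^ ρ) ∧
      (∀ ε > 0, Summable fun k => 1 / a k ^ (ρ + ε)) ∧
      Tendsto (fun r => (Nat.card {k : ℕ | a k < r} : ℝ) / r ^ ρ) atTop (nhds 0) ∧
      Tendsto (fun r => Real.log r * (Nat.card {k : ℕ | a k < r} : ℝ) / r ^ ρ)
        atTop (nhds 0) := by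
  have he : exp 1 < 3 := by linarith [exp_one_lt_d9]
  have hk (k : ℕ) : exp 1 < k + 3 := by linarith [k.cast_nonneg (α := ℝ)]
  set b : ℕ → ℝ := fun k => xLogLog (k + 3)
  have hb_pos (k : ℕ) : 0 < b k := xLogLog_pos (hk k)
  have hb_mono : Monotone b := fun k l hkl => xLogLog_monotoneOn (hk k) (hk l) (by gcongr)
  have hb_top : Tendsto b atTop atTop := tendsto_xLogLog_atTop.comp <|
    tendsto_atTop_add_const_right _ 3 tendsto_natCast_atTop_atTop
  have hlog := tendsto_log_mul_card_setOf_rpow_inv_lt_div (fun k => (hb_pos k).le) hρ <|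
    tendsto_log_mul_card_setOf_lt_div hb_mono hb_top (tendsto_nat_add_one_mul_log_xLogLog_div he)
  refine ⟨fun k => b k ^ ρ⁻¹, fun k => rpow_pos_of_pos (hb_pos k) _,
    fun k l hkl => rpow_le_rpow (hb_pos k).le (hb_mono hkl) (inv_nonneg.2 hρ.le),
    (tendsto_rpow_atTop (inv_pos.2 hρ)).comp hb_top, ?_, fun ε hε => ?_,
    tendsto_div_of_tendsto_log_mul_div hlog, hlog⟩
  · simpa only [rpow_inv_rpow (hb_pos _).le hρ.ne'] using
      not_summable_one_div_xLogLog_nat_add he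
  · have hexp (k : ℕ) : (b k ^ ρ⁻¹) ^ (ρ + ε) = b k ^ (1 + ε / ρ) := by
      rw [← rpow_mul (hb_pos k).le]; field_simp
    simpa only [hexp] using summable_one_div_xLogLog_nat_add_rpow (by norm_num) (div_pos hε hρ)
end

section
/- Let (b_i)_{i≥1} be a nondecreasing sequence of real numbers with b_i > 1 and b_i → ∞, let γ > 0, and suppose i · (ln b_i)/b_i^γ → 0 as i → ∞. Then the counting function n(r) = #{i : b_i < r} satisfies n(r)·(ln r)/r^γ → 0 as r → ∞. -/
/-!
Since `b` is nondecreasing, `{i | b i < r}` is the initial segment `{0, …, j}` where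
`b j < r ≤ b (j + 1)`, so `n(r) = j + 1`. As `x ↦ log x / x ^ γ` decreases on `[e^{1/γ}, ∞)`,
`n(r) · log r / r ^ γ ≤ (j + 1) · log (b j) / (b j) ^ γ`, and the right side tends to `0`
as `j → ∞`, which happens as `r → ∞`.
-/

open Filter Real

namespace Monotone

variable {b : ℕ → ℝ} {r : ℝ}

lemma card_setOf_lt_eq_succ (hb : Monotone b) {j : ℕ} (hj : b j < r) (hj' : r ≤ b (j + 1)) :
    Nat.card {i | b i < r} = j + 1 := by
  have : {i | b i < r} = Set.Iio (j + 1) := by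
    ext i
    simp only [Set.mem_ofPred_eq, Set.mem_Iio]
    refine ⟨fun hi => ?_, fun hi => (hb (Nat.lt_succ_iff.mp hi)).trans_lt hj⟩
    by_contra! hji
    exact (hj'.trans (hb hji)).not_gt hi
  simp [this]

lemma exists_lt_le_succ (hb : Tendsto b atTop atTop) (hr : b 0 < r) :
    ∃ j, b j < r ∧ r ≤ b (j + 1) := by
  classical
  have hex : ∃ m, r ≤ b m := (hb.eventually_ge_atTop r).exists
  have hm : Nat.find hex ≠ 0 := fun h0 => (Nat.find_spec hex).not_gt (h0 ▸ hr)
  obtain ⟨j, hj⟩ := Nat.exists_eq_succ_of_ne_zero hm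
  exact ⟨j, not_le.mp (Nat.find_min hex (by omega)), by simpa [hj] using Nat.find_spec hex⟩

lemma lt_le_card_setOf_lt (hb : Monotone b) (hb' : Tendsto b atTop atTop) (hr : b 0 < r) :
    b (Nat.card {i | b i < r} - 1) < r ∧ r ≤ b (Nat.card {i | b i < r} - 1 + 1) := by
  obtain ⟨j, hj, hj'⟩ := exists_lt_le_succ hb' hr
  rw [hb.card_setOf_lt_eq_succ hj hj', Nat.add_sub_cancel]
  exact ⟨hj, hj'⟩

lemma tendsto_card_setOf_lt (hb : Monotone b) (hb' : Tendsto b atTop atTop) :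
    Tendsto (fun r : ℝ => Nat.card {i | b i < r} - 1) atTop atTop := by
  refine tendsto_atTop.mpr fun N => ?_
  filter_upwards [eventually_gt_atTop (max (b 0) (b N))] with r hr
  have hbr := (hb.lt_le_card_setOf_lt hb' ((le_max_left _ _).trans_lt hr)).2
  have : N < Nat.card {i | b i < r} - 1 + 1 :=
    hb.reflect_lt (((le_max_right _ _).trans_lt hr).trans_le hbr)
  omega

end Monotone

lemma log_div_rpow_le_of_le {γ s t : ℝ} (hγ : 0 < γ) (hs : exp γ⁻¹ ≤ s) (hst : s ≤ t) :
    log t / t ^ γ ≤ log s / s ^ γ :=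
  log_div_self_rpow_antitoneOn hγ hs (hs.trans hst) hst

theorem stmt_8_general (b : ℕ → ℝ) (hmono : Monotone b)
    (htend : Tendsto b atTop atTop) (γ : ℝ) (hγ : 0 < γ)
    (h : Tendsto (fun i : ℕ => (i : ℝ) * Real.log (b i) / b i ^ γ) atTop (nhds 0)) :
    Tendsto (fun r : ℝ => (Nat.card {i : ℕ | b i < r} : ℝ) * Real.log r / r ^ γ)
      atTop (nhds 0) := by
  have hlog : Tendsto (fun i => log (b i) / b i ^ γ) atTop (nhds 0) :=
    (isLittleO_log_rpow_atTop hγ).tendsto_div_nhds_zero.comp htend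
  have hsucc : Tendsto (fun j : ℕ => ((j : ℝ) + 1) * (log (b j) / b j ^ γ)) atTop (nhds 0) := by
    simpa [add_mul, mul_div_assoc] using h.add hlog
  have hj := hmono.tendsto_card_setOf_lt htend
  refine squeeze_zero' ?_ ?_ (hsucc.comp hj)
  · filter_upwards [eventually_ge_atTop 1] with r hr
    have := log_nonneg hr
    positivity
  filter_upwards [eventually_gt_atTop (b 0), hj.eventually (htend.eventually_ge_atTop (exp γ⁻¹))]
    with r hr hbj
  obtain ⟨hjr, hrj⟩ := hmono.lt_le_card_setOf_lt htend hr
  rw [hmono.card_setOf_lt_eq_succ hjr hrj, mul_div_assoc]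
  push_cast
  exact mul_le_mul_of_nonneg_left (log_div_rpow_le_of_le hγ hbj hjr.le) (by positivity)

/-- If `(b_i)` is a nondecreasing sequence of reals `> 1` tending to infinity, `γ > 0`,
and `i·ln(b_i)/b_i^γ → 0`, then the counting function `n(r) = #{i : b_i < r}` satisfies
`n(r)·ln r / r^γ → 0` as `r → ∞`. -/
theorem stmt_8 (b : ℕ → ℝ) (hb1 : ∀ i, 1 < b i) (hmono : Monotone b)
    (htend : Tendsto b atTop atTop) (γ : ℝ) (hγ : 0 < γ)
    (h : Tendsto (fun i : ℕ => (i : ℝ) * Real.log (b i) / b i ^ γ) atTop (nhds 0)) :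
    Tendsto (fun r : ℝ => (Nat.card {i : ℕ | b i < r} : ℝ) * Real.log r / r ^ γ)
      atTop (nhds 0) :=
  stmt_8_general b hmono htend γ hγ h
end

section
/- Let H be a complex Hilbert space, M ⊆ H a linear subspace equipped with a second norm ‖·‖₊ satisfying ‖f‖ ≤ C₀‖f‖₊ for all f ∈ M (C₀ > 0), and let W : M → H be a linear map such that Re⟪Wf, f⟫ ≥ C₂‖f‖₊² and |Im⟪Wf, f⟫| ≤ C₃‖f‖₊·‖f‖ for all f ∈ M, where C₂, C₃ > 0. Then for every k > 0 and all f ∈ M, Re⟪Wf, f⟫ − k·|Im⟪Wf, f⟫| ≥ ι‖f‖², where ι = C₂/(2C₀²) − k²C₃²/(2C₂); equivalently, the numerical range of W is contained in the sector with vertex ι on the real axis and semi-angle arctan(1/k). -/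
local notation "⟪" x ", " y "⟫" => @inner ℂ _ _ x y

/-!
Young's inequality `2ab ≤ C₂ a² + C₂⁻¹ b²` with `a = N f` and `b = k C₃ ‖f‖` absorbs
`k |Im⟪Wf, f⟫|` into half of the coercivity bound `C₂ (N f)²` plus `k² C₃² ‖f‖² / (2 C₂)`;
the remaining half `C₂ (N f)² / 2` dominates `C₂ ‖f‖² / (2 C₀²)` by the embedding `‖f‖ ≤ C₀ N f`.
-/

lemma sq_div_sq_le_sq_of_le_mul {m n c : ℝ} (hm : 0 ≤ m) (h : m ≤ c * n) :
    m ^ 2 / c ^ 2 ≤ n ^ 2 :=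
  div_le_of_le_mul₀ (sq_nonneg c) (sq_nonneg n) <| by
    rw [← mul_pow, mul_comm]
    exact pow_le_pow_left₀ hm h 2

lemma sub_mul_abs_im_ge_of_coercive {z : ℂ} {m n C₀ C₂ C₃ k : ℝ} (hC₂ : 0 < C₂) (hk : 0 ≤ k)
    (hm : 0 ≤ m) (hemb : m ≤ C₀ * n) (hre : C₂ * n ^ 2 ≤ z.re) (him : |z.im| ≤ C₃ * n * m) :
    (C₂ / (2 * C₀ ^ 2) - k ^ 2 * C₃ ^ 2 / (2 * C₂)) * m ^ 2 ≤ z.re - k * |z.im| := by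
  have hm_n : C₂ / 2 * (m ^ 2 / C₀ ^ 2) ≤ C₂ / 2 * n ^ 2 :=
    mul_le_mul_of_nonneg_left (sq_div_sq_le_sq_of_le_mul hm hemb) (half_pos hC₂).le
  have hk_im : k * |z.im| ≤ n * (k * C₃ * m) := by
    calc k * |z.im| ≤ k * (C₃ * n * m) := mul_le_mul_of_nonneg_left him hk
      _ = n * (k * C₃ * m) := by ring
  have hyoung : 2 * n * (k * C₃ * m) ≤ C₂ * n ^ 2 + C₂⁻¹ * (k * C₃ * m) ^ 2 :=
    two_mul_le_add_mul_sq hC₂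
  have hsplit : (C₂ / (2 * C₀ ^ 2) - k ^ 2 * C₃ ^ 2 / (2 * C₂)) * m ^ 2 =
      C₂ / 2 * (m ^ 2 / C₀ ^ 2) - C₂⁻¹ * (k * C₃ * m) ^ 2 / 2 := by
    ring
  rw [hsplit]
  linarith

theorem stmt_11_general {H : Type*} [NormedAddCommGroup H] [InnerProductSpace ℂ H]
    (M : Submodule ℂ H) (N : H → ℝ) (W : M →ₗ[ℂ] H)
    (C₀ C₂ C₃ : ℝ) (hC₂ : 0 < C₂)
    (hemb : ∀ f : M, ‖(f : H)‖ ≤ C₀ * N f)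
    (hre : ∀ f : M, C₂ * (N f) ^ 2 ≤ (⟪W f, (f : H)⟫).re)
    (him : ∀ f : M, |(⟪W f, (f : H)⟫).im| ≤ C₃ * N f * ‖(f : H)‖) :
    ∀ k : ℝ, 0 < k → ∀ f : M,
      (C₂ / (2 * C₀ ^ 2) - k ^ 2 * C₃ ^ 2 / (2 * C₂)) * ‖(f : H)‖ ^ 2 ≤
        (⟪W f, (f : H)⟫).re - k * |(⟪W f, (f : H)⟫).im| :=
  fun _ hk f =>
    sub_mul_abs_im_ge_of_coercive hC₂ hk.le (norm_nonneg _) (hemb f) (hre f) (him f)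

/-- Sectoriality under hypothesis (H3): if `‖f‖ ≤ C₀·N f`, `Re⟪Wf,f⟫ ≥ C₂·(N f)²` and
`|Im⟪Wf,f⟫| ≤ C₃·N f·‖f‖` on the domain `M`, then for every `k > 0` and `f ∈ M`,
`Re⟪Wf,f⟫ - k·|Im⟪Wf,f⟫| ≥ ι‖f‖²` with `ι = C₂/(2C₀²) - k²C₃²/(2C₂)`. -/
theorem stmt_11 {H : Type*} [NormedAddCommGroup H] [InnerProductSpace ℂ H]
    (M : Submodule ℂ H) (N : H → ℝ) (W : M →ₗ[ℂ] H)
    (C₀ C₂ C₃ : ℝ) (hC₀ : 0 < C₀) (hC₂ : 0 < C₂) (hC₃ : 0 < C₃)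
    (hemb : ∀ f : M, ‖(f : H)‖ ≤ C₀ * N f)
    (hre : ∀ f : M, C₂ * (N f) ^ 2 ≤ (⟪W f, (f : H)⟫).re)
    (him : ∀ f : M, |(⟪W f, (f : H)⟫).im| ≤ C₃ * N f * ‖(f : H)‖) :
    ∀ k : ℝ, 0 < k → ∀ f : M,
      (C₂ / (2 * C₀ ^ 2) - k ^ 2 * C₃ ^ 2 / (2 * C₂)) * ‖(f : H)‖ ^ 2 ≤
        (⟪W f, (f : H)⟫).re - k * |(⟪W f, (f : H)⟫).im| :=
  stmt_11_general M N W C₀ C₂ C₃ hC₂ hemb hre him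
end

section
/- Let (λ_n)_{n≥1} be a nondecreasing sequence of positive real numbers tending to infinity and let p > 0. If (λ_{n+1} − λ_n)/λ_n^{(p−1)/p} → 0 as n → ∞, then λ_n/n^p → 0 as n → ∞. -/
/-!
Put `μ n = λ n ^ (1/p)` and `r n = λ (n+1) / λ n`. The hypothesis says
`μ n * (r n - 1) → 0`; since `μ n → ∞` this forces `r n → 1`, and as
`x ^ (1/p) - 1 = O(x - 1)` near `1`, the increments `μ (n+1) - μ n = μ n * (r n ^ (1/p) - 1)`
tend to `0`. By Cesàro `μ n / n → 0`, and raising this to the power `p` gives `λ n / n ^ p → 0`.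
-/

open Filter Asymptotics Topology

lemma tendsto_div_natCast_of_tendsto_sub {u : ℕ → ℝ}
    (h : Tendsto (fun n => u (n + 1) - u n) atTop (𝓝 0)) :
    Tendsto (fun n : ℕ => u n / n) atTop (𝓝 0) := by
  have hmean : Tendsto (fun n : ℕ => (u n - u 0) / n) atTop (𝓝 0) := by
    simpa only [Finset.sum_range_sub, inv_mul_eq_div] using h.cesaro
  have hinit : Tendsto (fun n : ℕ => u 0 / n) atTop (𝓝 0) :=
    tendsto_const_div_atTop_nhds_zero_nat (u 0)
  simpa only [sub_div, sub_add_cancel, add_zero] using hmean.add hinit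

lemma rpow_sub_one_isBigO_sub_one (q : ℝ) :
    (fun x : ℝ => x ^ q - 1) =O[𝓝 1] (fun x => x - 1) := by
  simpa only [Real.one_rpow] using
    (Real.differentiableAt_rpow_const_of_ne q one_ne_zero).isBigO_sub

lemma tendsto_rpow_succ_sub_rpow {a : ℕ → ℝ} {q : ℝ} (hq : 0 < q)
    (ha : Tendsto a atTop atTop)
    (h : Tendsto (fun n => (a (n + 1) - a n) / a n ^ (1 - q)) atTop (𝓝 0)) :
    Tendsto (fun n => a (n + 1) ^ q - a n ^ q) atTop (𝓝 0) := by
  set r : ℕ → ℝ := fun n => a (n + 1) / a n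
  have hpos : ∀ᶠ n in atTop, 0 < a n ∧ 0 < a (n + 1) :=
    (ha.eventually_gt_atTop 0).and
      ((tendsto_add_atTop_iff_nat 1).2 ha |>.eventually_gt_atTop 0)
  have hg : Tendsto (fun n => a n ^ q * (r n - 1)) atTop (𝓝 0) := by
    refine h.congr' ?_
    filter_upwards [hpos] with n hn
    rw [Real.rpow_sub hn.1, Real.rpow_one]
    simp only [r]
    field_simp [hn.1.ne']
  have hr : Tendsto r atTop (𝓝 1) := by
    have hinv : Tendsto (fun n => (a n ^ q)⁻¹) atTop (𝓝 0) :=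
      ((tendsto_rpow_atTop hq).comp ha).inv_tendsto_atTop
    rw [← tendsto_sub_nhds_zero_iff, ← zero_mul 0]
    refine (hinv.mul hg).congr' ?_
    filter_upwards [hpos] with n hn
    rw [inv_mul_cancel_left₀ (Real.rpow_pos_of_pos hn.1 q).ne']
  have hO : (fun n => a n ^ q * (r n ^ q - 1)) =O[atTop] (fun n => a n ^ q * (r n - 1)) :=
    (isBigO_refl _ _).mul ((rpow_sub_one_isBigO_sub_one q).comp_tendsto hr)
  refine (hO.trans_tendsto hg).congr' ?_
  filter_upwards [hpos] with n hn
  rw [Real.div_rpow hn.2.le hn.1.le, mul_sub_one,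
    mul_div_cancel₀ _ (Real.rpow_pos_of_pos hn.1 q).ne']

theorem stmt_13_general (lam : ℕ → ℝ)
    (htend : Tendsto lam atTop atTop) (p : ℝ) (hp : 0 < p)
    (h : Tendsto (fun n : ℕ => (lam (n + 1) - lam n) / lam n ^ ((p - 1) / p))
      atTop (nhds 0)) :
    Tendsto (fun n : ℕ => lam n / (n : ℝ) ^ p) atTop (nhds 0) := by
  have hexp : (p - 1) / p = 1 - p⁻¹ := by field_simp
  rw [hexp] at h
  have hroot : Tendsto (fun n : ℕ => lam n ^ p⁻¹ / n) atTop (𝓝 0) :=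
    tendsto_div_natCast_of_tendsto_sub (tendsto_rpow_succ_sub_rpow (inv_pos.2 hp) htend h)
  have hpow := hroot.rpow_const (Or.inr hp.le)
  rw [Real.zero_rpow hp.ne'] at hpow
  refine hpow.congr' ?_
  filter_upwards [htend.eventually_gt_atTop 0] with n hn
  rw [Real.div_rpow (Real.rpow_nonneg hn.le _) n.cast_nonneg, Real.rpow_inv_rpow hn.le hp.ne']

/-- (Agranovich) If `(λ_n)` is a nondecreasing sequence of positive reals tending to
infinity, `p > 0`, and `(λ_{n+1} - λ_n)/λ_n^((p-1)/p) → 0`, then `λ_n/n^p → 0`. -/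
theorem stmt_13 (lam : ℕ → ℝ) (hpos : ∀ n, 0 < lam n) (hmono : Monotone lam)
    (htend : Tendsto lam atTop atTop) (p : ℝ) (hp : 0 < p)
    (h : Tendsto (fun n : ℕ => (lam (n + 1) - lam n) / lam n ^ ((p - 1) / p))
      atTop (nhds 0)) :
    Tendsto (fun n : ℕ => lam n / (n : ℝ) ^ p) atTop (nhds 0) :=
  stmt_13_general lam htend p hp h
end

section
/- Let (λ_n)_{n≥1} be a nondecreasing sequence of positive real numbers such that λ_n ≥ C·n^τ for all n, where C > 0 and τ > 0. Then there exist K > 0 and a strictly increasing sequence of indices (N_ν)_{ν≥0} such that λ_{N_ν+1} − λ_{N_ν} ≥ K·λ_{N_ν+1}^{1−1/τ} for every ν. -/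
open Filter

/-! With `s = 1/τ` the growth hypothesis reads `λ_n^s ≥ C^s n`, so the increments
`λ_{n+1}^s - λ_n^s` exceed `C^s/2` infinitely often. At each such index the mean-value bound
`b^(1-s) (b^s - a^s) ≤ max 1 s · (b - a)` turns this into the required gap, with
`K = C^s / (2 max 1 s)`. -/

lemma one_sub_rpow_le_max_mul_one_sub {t : ℝ} (s : ℝ) (ht₀ : 0 ≤ t) (ht₁ : t ≤ 1) :
    1 - t ^ s ≤ max 1 s * (1 - t) := by
  rcases le_total s 1 with hs | hs
  · nlinarith [Real.self_le_rpow_of_le_one ht₀ ht₁ hs, le_max_left 1 s]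
  · have bernoulli := one_add_mul_self_le_rpow_one_add (s := t - 1) (by linarith) hs
    rw [add_sub_cancel] at bernoulli
    nlinarith [le_max_right 1 s]

lemma rpow_one_sub_mul_rpow_sub_rpow_le {a b : ℝ} (s : ℝ) (ha : 0 ≤ a) (hab : a ≤ b) :
    b ^ (1 - s) * (b ^ s - a ^ s) ≤ max 1 s * (b - a) := by
  rcases hab.eq_or_lt with rfl | hab
  · simp
  have hb : 0 < b := ha.trans_lt hab
  have hbs : 0 < b ^ s := Real.rpow_pos_of_pos hb s
  calc b ^ (1 - s) * (b ^ s - a ^ s) = b * (1 - (a / b) ^ s) := by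
        rw [Real.rpow_sub hb, Real.rpow_one, Real.div_rpow ha hb.le]
        field_simp
    _ ≤ b * (max 1 s * (1 - a / b)) := by
        gcongr
        exact one_sub_rpow_le_max_mul_one_sub s (by positivity) ((div_le_one hb).mpr hab.le)
    _ = max 1 s * (b - a) := by
        field_simp

lemma le_add_mul_sub_of_sub_le {f : ℕ → ℝ} {d : ℝ} {n₀ : ℕ}
    (h : ∀ n ≥ n₀, f (n + 1) - f n ≤ d) : ∀ n ≥ n₀, f n ≤ f n₀ + d * (n - n₀) := by
  intro n hn
  induction n, hn using Nat.le_induction with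
  | base => simp
  | succ n hn ih =>
    push_cast
    linarith [h n hn]

lemma frequently_lt_sub_of_mul_le {f : ℕ → ℝ} {a d : ℝ} (hd : d < a)
    (hf : ∀ᶠ n : ℕ in atTop, a * n ≤ f n) : ∃ᶠ n in atTop, d < f (n + 1) - f n := by
  by_contra hsmall
  simp only [not_frequently, not_lt, eventually_atTop] at hsmall
  obtain ⟨n₀, hn₀⟩ := hsmall
  have hlarge : ∀ᶠ n : ℕ in atTop, (f n₀ - d * n₀) / (a - d) < n :=
    tendsto_natCast_atTop_atTop.eventually_gt_atTop _
  obtain ⟨n, hfn, hn, hn₀n⟩ := (hf.and (hlarge.and (eventually_ge_atTop n₀))).exists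
  rw [div_lt_iff₀ (sub_pos.mpr hd)] at hn
  linarith [le_add_mul_sub_of_sub_le hn₀ n hn₀n]

theorem stmt_14_general (lam : ℕ → ℝ)
    (C τ : ℝ) (hC : 0 < C) (hτ : 0 < τ)
    (hgrow : ∀ n : ℕ, C * (n : ℝ) ^ τ ≤ lam n) :
    ∃ K : ℝ, 0 < K ∧ ∃ N : ℕ → ℕ, StrictMono N ∧
      ∀ ν : ℕ, K * lam (N ν + 1) ^ (1 - 1 / τ) ≤ lam (N ν + 1) - lam (N ν) := by
  set s := 1 / τ
  have hs : 0 < s := by positivity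
  have hCs : 0 < C ^ s := by positivity
  have hnonneg (n : ℕ) : 0 ≤ lam n := (by positivity : 0 ≤ C * (n : ℝ) ^ τ).trans (hgrow n)
  have hlin (n : ℕ) : C ^ s * n ≤ lam n ^ s :=
    calc C ^ s * n = (C * (n : ℝ) ^ τ) ^ s := by
          rw [Real.mul_rpow hC.le (by positivity), ← Real.rpow_mul n.cast_nonneg,
            mul_one_div_cancel hτ.ne', Real.rpow_one]
      _ ≤ lam n ^ s := Real.rpow_le_rpow (by positivity) (hgrow n) hs.le
  obtain ⟨N, hN, hjump⟩ := extraction_of_frequently_atTop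
    (frequently_lt_sub_of_mul_le (half_lt_self hCs) (.of_forall hlin))
  refine ⟨C ^ s / 2 / max 1 s, by positivity, N, hN, fun ν => ?_⟩
  have hlt : lam (N ν) < lam (N ν + 1) :=
    (Real.rpow_lt_rpow_iff (hnonneg _) (hnonneg _) hs).mp (by linarith [hjump ν])
  rw [div_mul_eq_mul_div, div_le_iff₀ (by positivity), mul_comm _ (max 1 s)]
  calc C ^ s / 2 * lam (N ν + 1) ^ (1 - s)
      ≤ lam (N ν + 1) ^ (1 - s) * (lam (N ν + 1) ^ s - lam (N ν) ^ s) := by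
        rw [mul_comm]
        exact mul_le_mul_of_nonneg_left (hjump ν).le (Real.rpow_nonneg (hnonneg _) _)
    _ ≤ max 1 s * (lam (N ν + 1) - lam (N ν)) :=
        rpow_one_sub_mul_rpow_sub_rpow_le s (hnonneg _) hlt.le

/-- Subsequence-with-gaps construction: if `(λ_n)` is a nondecreasing sequence of positive
reals with `λ_n ≥ C·n^τ` (`C, τ > 0`), then there exist `K > 0` and a strictly increasing
sequence of indices `(N_ν)` with `λ_{N_ν + 1} - λ_{N_ν} ≥ K·λ_{N_ν + 1}^(1 - 1/τ)`. -/
theorem stmt_14 (lam : ℕ → ℝ) (hpos : ∀ n, 0 < lam n) (hmono : Monotone lam)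
    (C τ : ℝ) (hC : 0 < C) (hτ : 0 < τ)
    (hgrow : ∀ n : ℕ, C * (n : ℝ) ^ τ ≤ lam n) :
    ∃ K : ℝ, 0 < K ∧ ∃ N : ℕ → ℕ, StrictMono N ∧
      ∀ ν : ℕ, K * lam (N ν + 1) ^ (1 - 1 / τ) ≤ lam (N ν + 1) - lam (N ν) :=
  stmt_14_general lam C τ hC hτ hgrow
end
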